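/- Let n ≥ 1, s ≥ 2, let X_S ∈ ℝ^{n×s}, and let D denote the s×(s−1) matrix (I_{s−1}, −1_{s−1})ᵀ. Set Σ_SS = (1/n) X_Sᵀ X_S ∈ ℝ^{s×s} and Σ^p_SS = (1/n)(X_S D)ᵀ(X_S D) ∈ ℝ^{(s−1)×(s−1)}. Then the smallest eigenvalue of Σ_SS is less than or equal to the smallest eigenvalue of Σ^p_SS, i.e., Λ_min(Σ_SS) ≤ Λ_min(Σ^p_SS). -/

import Mathlib

/-!
Writing `w = D v`, the quadratic form of `Σ^p_SS` at `v` is that of `Σ_SS` at `w`, while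
`‖w‖² = ‖v‖² + (∑ⱼ vⱼ)² ≥ ‖v‖²`. As `Σ_SS` is positive semidefinite, the Rayleigh quotient of
`Σ^p_SS` at `v` therefore dominates that of `Σ_SS` at `w`, which is at least `Λ_min(Σ_SS)`.
-/

open Matrix
open scoped BigOperators

/-- The `s × (s−1)` matrix `D = (I_{s−1}, −1_{s−1})ᵀ`. -/
def Dmat (s : ℕ) : Matrix (Fin s) (Fin (s - 1)) ℝ := fun i j =>
  if (i : ℕ) = (j : ℕ) then 1 else if (i : ℕ) = s - 1 then -1 else 0

/-- The smallest eigenvalue of a real symmetric matrix, expressed as the infimum of the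
Rayleigh quotient `vᵀ M v / ‖v‖₂²` over nonzero vectors `v`. -/
noncomputable def lamMin {m : Type*} [Fintype m] (M : Matrix m m ℝ) : ℝ :=
  ⨅ v : {v : m → ℝ // v ≠ 0}, (v.1 ⬝ᵥ M.mulVec v.1) / ∑ i, (v.1 i) ^ 2

section lamMin

variable {m k : Type*} [Fintype m] [Fintype k] {M : Matrix m m ℝ}

lemma lamMin_le_rayleigh (hM : M.PosSemidef) {w : m → ℝ} (hw : w ≠ 0) :
    lamMin M ≤ (w ⬝ᵥ M *ᵥ w) / ∑ i, w i ^ 2 := by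
  unfold lamMin
  refine ciInf_le ⟨0, ?_⟩ (⟨w, hw⟩ : {v : m → ℝ // v ≠ 0})
  rintro _ ⟨u, rfl⟩
  exact div_nonneg (hM.dotProduct_mulVec_nonneg u.1) (by positivity)

lemma lamMin_le_lamMin_transpose_mul_mul [Nonempty k] (hM : M.PosSemidef) (D : Matrix m k ℝ)
    (hD : ∀ v, ∑ i, v i ^ 2 ≤ ∑ i, (D *ᵥ v) i ^ 2) :
    lamMin M ≤ lamMin (Dᵀ * M * D) := by
  have : Nonempty {v : k → ℝ // v ≠ 0} := ⟨⟨1, one_ne_zero⟩⟩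
  refine le_ciInf fun ⟨v, hv⟩ => ?_
  have hv_pos : 0 < ∑ i, v i ^ 2 := by
    obtain ⟨i, hi⟩ := Function.ne_iff.mp hv
    exact Finset.sum_pos' (fun i _ => sq_nonneg (v i))
      ⟨i, Finset.mem_univ i, sq_pos_of_ne_zero hi⟩
  have hDv : D *ᵥ v ≠ 0 := fun h => by simpa [h] using hv_pos.trans_le (hD v)
  have hquad : v ⬝ᵥ (Dᵀ * M * D) *ᵥ v = D *ᵥ v ⬝ᵥ M *ᵥ (D *ᵥ v) := by
    rw [← mulVec_mulVec, ← mulVec_mulVec, dotProduct_mulVec, vecMul_transpose]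
  calc lamMin M ≤ (D *ᵥ v ⬝ᵥ M *ᵥ (D *ᵥ v)) / ∑ i, (D *ᵥ v) i ^ 2 := lamMin_le_rayleigh hM hDv
    _ ≤ (D *ᵥ v ⬝ᵥ M *ᵥ (D *ᵥ v)) / ∑ i, v i ^ 2 :=
      div_le_div_of_nonneg_left (hM.dotProduct_mulVec_nonneg _) hv_pos (hD v)
    _ = (v ⬝ᵥ (Dᵀ * M * D) *ᵥ v) / ∑ i, v i ^ 2 := by rw [hquad]

end lamMin

lemma Dmat_mulVec_castSucc (t : ℕ) (v : Fin t → ℝ) (i : Fin t) :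
    (Dmat (t + 1) *ᵥ v) i.castSucc = v i := by
  change ∑ j : Fin t, Dmat (t + 1) i.castSucc j * v j = v i
  rw [Finset.sum_eq_single i]
  · simp [Dmat]
  · intro j _ hji
    have hij : (i : ℕ) ≠ j := fun h => hji (Fin.ext h.symm)
    simp [Dmat, hij, i.isLt.ne]
  · simp

lemma Dmat_mulVec_last (t : ℕ) (v : Fin t → ℝ) :
    (Dmat (t + 1) *ᵥ v) (Fin.last t) = -∑ j, v j := by
  rw [mulVec, dotProduct, ← Finset.sum_neg_distrib]
  refine Finset.sum_congr rfl fun j _ => ?_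
  have hj : t ≠ j := by have := j.isLt; omega
  simp [Dmat, hj]

lemma sum_sq_Dmat_mulVec (t : ℕ) (v : Fin t → ℝ) :
    ∑ i, (Dmat (t + 1) *ᵥ v) i ^ 2 = ∑ i, v i ^ 2 + (∑ j, v j) ^ 2 := by
  simp only [Fin.sum_univ_castSucc, Dmat_mulVec_castSucc, Dmat_mulVec_last, neg_sq]

lemma sum_sq_le_sum_sq_Dmat_mulVec (s : ℕ) (v : Fin (s - 1) → ℝ) :
    ∑ i, v i ^ 2 ≤ ∑ i, (Dmat s *ᵥ v) i ^ 2 := by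
  cases s with
  | zero => exact (Fintype.sum_empty (ι := Fin 0) _).le.trans (by positivity)
  | succ t => exact (sum_sq_Dmat_mulVec t v).symm ▸ le_add_of_nonneg_right (sq_nonneg _)

theorem lamMin_gram_le_lamMin_logratio_gram_general
    (n s : ℕ) (hs : 2 ≤ s) (XS : Matrix (Fin n) (Fin s) ℝ) :
    lamMin ((1 / (n : ℝ)) • (XSᵀ * XS))
      ≤ lamMin ((1 / (n : ℝ)) • ((XS * Dmat s)ᵀ * (XS * Dmat s))) := by
  have : Nonempty (Fin (s - 1)) := ⟨⟨0, by omega⟩⟩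
  have hgram : ((1 / (n : ℝ)) • (XSᵀ * XS)).PosSemidef := by
    simpa only [conjTranspose_eq_transpose_of_trivial] using
      (posSemidef_conjTranspose_mul_self XS).smul (by positivity : (0 : ℝ) ≤ 1 / n)
  have hconj : (1 / (n : ℝ)) • ((XS * Dmat s)ᵀ * (XS * Dmat s))
      = (Dmat s)ᵀ * ((1 / (n : ℝ)) • (XSᵀ * XS)) * Dmat s := by
    simp only [transpose_mul, Matrix.mul_smul, Matrix.smul_mul, Matrix.mul_assoc]
  rw [hconj]
  exact lamMin_le_lamMin_transpose_mul_mul hgram _ (sum_sq_le_sum_sq_Dmat_mulVec s)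

/-- With `Σ_SS = (1/n) X_Sᵀ X_S` and `Σ^p_SS = (1/n)(X_S D)ᵀ(X_S D)`, the smallest eigenvalue
of `Σ_SS` is at most the smallest eigenvalue of `Σ^p_SS`. -/
theorem lamMin_gram_le_lamMin_logratio_gram
    (n s : ℕ) (hn : 1 ≤ n) (hs : 2 ≤ s) (XS : Matrix (Fin n) (Fin s) ℝ) :
    lamMin ((1 / (n : ℝ)) • (XSᵀ * XS))
      ≤ lamMin ((1 / (n : ℝ)) • ((XS * Dmat s)ᵀ * (XS * Dmat s))) :=
  lamMin_gram_le_lamMin_logratio_gram_general n s hs XS
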